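/- arXiv:1308.6556 — 4 statements merged into one kernel-verified Lean document; each statement's English description precedes it below -/
import Mathlib

section
/- Let A₀ = (i/3)·[[0,−3,−√3],[3,0,√3],[√3,−√3,0]], A₁ = [[0,0,0],[0,1,0],[0,0,−1]], A₂ = [[1,0,0],[0,0,0],[0,0,0]] (3×3 complex matrices). Then A₀, A₁, A₂ are self-adjoint, A₂ is positive semi-definite, and for all real x₀, x₁, x₂: 2x₀²x₁ − (x₀² + 3x₁²)x₂ = 3·det(x₀A₀ + x₁A₁ + x₂A₂). -/
open Matrix ComplexOrder

noncomputable def exA₀ : Matrix (Fin 3) (Fin 3) ℂ :=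
  (Complex.I / 3) • !![0, -3, -(Real.sqrt 3 : ℂ);
                       3, 0, (Real.sqrt 3 : ℂ);
                       (Real.sqrt 3 : ℂ), -(Real.sqrt 3 : ℂ), 0]

def exA₁ : Matrix (Fin 3) (Fin 3) ℂ :=
  !![0, 0, 0; 0, 1, 0; 0, 0, -1]

def exA₂ : Matrix (Fin 3) (Fin 3) ℂ :=
  !![1, 0, 0; 0, 0, 0; 0, 0, 0]

theorem Matrix.isHermitian_smul_of_conjTranspose_eq_neg {n : Type*} {M : Matrix n n ℂ}
    (hM : Mᴴ = -M) {c : ℂ} (hc : star c = -c) : (c • M).IsHermitian := by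
  rw [IsHermitian, conjTranspose_smul, hM, hc, neg_smul_neg]

theorem exA₀_isHermitian : exA₀.IsHermitian := by
  refine isHermitian_smul_of_conjTranspose_eq_neg ?_ ?_
  · ext i j
    fin_cases i <;> fin_cases j <;> simp [conjTranspose_apply]
  · simp [Complex.conj_I, neg_div]

theorem exA₁_eq_diagonal : exA₁ = diagonal ![0, 1, -1] := by
  ext i j
  fin_cases i <;> fin_cases j <;> rfl

theorem exA₂_eq_diagonal : exA₂ = diagonal ![1, 0, 0] := by
  ext i j
  fin_cases i <;> fin_cases j <;> rfl

theorem exA₁_isHermitian : exA₁.IsHermitian := by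
  rw [exA₁_eq_diagonal, isHermitian_diagonal_iff]
  intro i
  fin_cases i <;> simp [IsSelfAdjoint]

theorem exA₂_posSemidef : exA₂.PosSemidef := by
  rw [exA₂_eq_diagonal, posSemidef_diagonal_iff]
  intro i
  fin_cases i <;> simp

theorem three_mul_det_exA_pencil (x₀ x₁ x₂ : ℂ) :
    3 * (x₀ • exA₀ + x₁ • exA₁ + x₂ • exA₂).det = 2 * x₀ ^ 2 * x₁ - (x₀ ^ 2 + 3 * x₁ ^ 2) * x₂ := by
  have hsqrt : (Real.sqrt 3 : ℂ) ^ 2 = 3 := by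
    rw [← Complex.ofReal_pow, Real.sq_sqrt (by norm_num)]
    norm_num
  simp only [exA₀, exA₁, exA₂, det_fin_three, smul_of, smul_cons, smul_eq_mul, smul_empty,
    of_add_of, add_cons, empty_add_empty, head_cons, tail_cons, of_apply, cons_val', cons_val_zero,
    cons_val_one, cons_val, cons_val_fin_one, mul_zero, mul_one, mul_neg, add_zero, zero_add]
  ring_nf
  rw [Complex.I_sq, hsqrt]
  ring

/-- **Example (determinantal representation).** The concrete matrices `A₀,A₁,A₂` above are
self-adjoint, `A₂` is positive semi-definite, and
`2x₀²x₁ − (x₀² + 3x₁²)x₂ = 3·det(x₀A₀ + x₁A₁ + x₂A₂)` for all real `x₀,x₁,x₂`. -/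
theorem example_det_representation :
    exA₀.IsHermitian ∧ exA₁.IsHermitian ∧ exA₂.PosSemidef ∧
    ∀ x₀ x₁ x₂ : ℝ,
      ((2 * x₀ ^ 2 * x₁ - (x₀ ^ 2 + 3 * x₁ ^ 2) * x₂ : ℝ) : ℂ) =
        3 * ((x₀ : ℂ) • exA₀ + (x₁ : ℂ) • exA₁ + (x₂ : ℂ) • exA₂).det := by
  refine ⟨exA₀_isHermitian, exA₁_isHermitian, exA₂_posSemidef, fun x₀ x₁ x₂ => ?_⟩
  rw [three_mul_det_exA_pencil]
  push_cast
  ring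
end

section
/- Let p(x₀,x₁,x₂) = 2x₀²x₁ − (x₀² + 3x₁²)x₂. Then both sets 𝒫₊ = {x ∈ ℝ³ : p(x) > 0} and 𝒫₋ = {x ∈ ℝ³ : p(x) < 0} are path-connected. -/
/-!
The polynomial is affine in `x₂`: `p = r(x₀, x₁) - q(x₀, x₁) x₂` with `q = x₀² + 3x₁²` and
`r = 2x₀²x₁`, and `r` vanishes wherever `q` does. So `𝒫₊` (resp. `𝒫₋`) is the part of
`(ℝ² ∖ {0}) × ℝ` on one side of the graph of the continuous function `r / q`, which is the image
of the path-connected set `(ℝ² ∖ {0}) × (0, ∞)` under `(a, s) ↦ (a, (r a ∓ s) / q a)`.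
-/

open Set

theorem IsPathConnected.of_preimage {Y Z : Type*} [TopologicalSpace Y] [TopologicalSpace Z]
    {f : Y → Z} (hf : Continuous f) (hsurj : Function.Surjective f) {s : Set Z}
    (h : IsPathConnected (f ⁻¹' s)) : IsPathConnected s :=
  hsurj.image_preimage s ▸ h.image hf

section AffineInLastCoordinate

variable {X : Type*} [TopologicalSpace X] {q r : X → ℝ}

theorem isPathConnected_setOf_pos_sub_mul (hq : Continuous q) (hr : Continuous r)
    (hrq : ∀ a, q a = 0 → r a = 0) (hB : IsPathConnected {a | q a ≠ 0}) :
    IsPathConnected {x : X × ℝ | 0 < r x.1 - q x.1 * x.2} := by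
  have himage : (fun y : X × ℝ => (y.1, (r y.1 - y.2) / q y.1)) '' ({a | q a ≠ 0} ×ˢ Ioi 0) =
      {x : X × ℝ | 0 < r x.1 - q x.1 * x.2} := by
    ext ⟨a, t⟩
    constructor
    · rintro ⟨⟨a, s⟩, ⟨ha, hs⟩, h⟩
      simp only [Prod.mk.injEq] at h
      obtain ⟨rfl, rfl⟩ := h
      simp only [mem_ofPred_eq] at ha hs ⊢
      rw [mul_div_cancel₀ _ ha]
      simpa using hs
    · intro h
      have ha : q a ≠ 0 := fun ha => by simp [ha, hrq a ha] at h
      refine ⟨(a, r a - q a * t), ⟨ha, h⟩, ?_⟩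
      simp only [sub_sub_cancel, mul_div_cancel_left₀ _ ha]
  rw [← himage]
  refine (hB.prod ((convex_Ioi 0).isPathConnected nonempty_Ioi)).image' ?_
  exact (continuousOn_fst.prodMk
    ((hr.comp continuous_fst).sub continuous_snd |>.continuousOn.div
      (hq.comp continuous_fst).continuousOn fun y hy => hy.1))

theorem isPathConnected_setOf_sub_mul_neg (hq : Continuous q) (hr : Continuous r)
    (hrq : ∀ a, q a = 0 → r a = 0) (hB : IsPathConnected {a | q a ≠ 0}) :
    IsPathConnected {x : X × ℝ | r x.1 - q x.1 * x.2 < 0} := by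
  have := isPathConnected_setOf_pos_sub_mul hq.neg hr.neg
    (fun a ha => by simpa using hrq a (neg_eq_zero.mp ha))
    (by simpa only [Pi.neg_apply, neg_ne_zero] using hB)
  convert this using 1
  ext x
  simp only [mem_ofPred_eq, Pi.neg_apply]
  constructor <;> intro h <;> linarith

end AffineInLastCoordinate

theorem sq_add_three_mul_sq_eq_zero_iff {a b : ℝ} : a ^ 2 + 3 * b ^ 2 = 0 ↔ a = 0 ∧ b = 0 := by
  constructor
  · intro h
    exact ⟨by nlinarith [sq_nonneg a, sq_nonneg b], by nlinarith [sq_nonneg a, sq_nonneg b]⟩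
  · rintro ⟨rfl, rfl⟩
    norm_num

/-- **Example (components).** For `p(x₀,x₁,x₂) = 2x₀²x₁ − (x₀² + 3x₁²)x₂`, both
`𝒫₊ = {x ∈ ℝ³ : p(x) > 0}` and `𝒫₋ = {x ∈ ℝ³ : p(x) < 0}` are path-connected. -/
theorem examplePoly_components_pathConnected :
    IsPathConnected {x : Fin 3 → ℝ |
        0 < 2 * (x 0) ^ 2 * (x 1) - ((x 0) ^ 2 + 3 * (x 1) ^ 2) * (x 2)} ∧
    IsPathConnected {x : Fin 3 → ℝ |
        2 * (x 0) ^ 2 * (x 1) - ((x 0) ^ 2 + 3 * (x 1) ^ 2) * (x 2) < 0} := by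
  have hq : Continuous fun a : ℝ × ℝ => a.1 ^ 2 + 3 * a.2 ^ 2 := by fun_prop
  have hr : Continuous fun a : ℝ × ℝ => 2 * a.1 ^ 2 * a.2 := by fun_prop
  have hrq (a : ℝ × ℝ) (ha : a.1 ^ 2 + 3 * a.2 ^ 2 = 0) : 2 * a.1 ^ 2 * a.2 = 0 := by
    simp [(sq_add_three_mul_sq_eq_zero_iff.mp ha).1]
  have hB : IsPathConnected {a : ℝ × ℝ | a.1 ^ 2 + 3 * a.2 ^ 2 ≠ 0} := by
    have : {a : ℝ × ℝ | a.1 ^ 2 + 3 * a.2 ^ 2 ≠ 0} = {0}ᶜ := by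
      ext a
      simp [sq_add_three_mul_sq_eq_zero_iff, Prod.ext_iff]
    rw [this]
    exact isPathConnected_compl_singleton_of_one_lt_rank (by simp; norm_num) 0
  have hF : Continuous fun y : (ℝ × ℝ) × ℝ => ![y.1.1, y.1.2, y.2] := by fun_prop
  have hsurj : Function.Surjective fun y : (ℝ × ℝ) × ℝ => ![y.1.1, y.1.2, y.2] :=
    fun x => ⟨((x 0, x 1), x 2), by ext i; fin_cases i <;> rfl⟩
  exact ⟨.of_preimage hF hsurj <| isPathConnected_setOf_pos_sub_mul hq hr hrq hB,
    .of_preimage hF hsurj <| isPathConnected_setOf_sub_mul_neg hq hr hrq hB⟩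
end

section
/- If p ∈ ℝ[x₀,x₁,x₂] is homogeneous and hyperbolic with respect to every vector in the cone {(0,v₁,v₂) : v₁ > 0, v₂ > 0}, then p is semi-hyperbolic with respect to e₂ = (0,0,1): for every x ∈ ℝ³, the one-variable polynomial t ↦ p(x − t·e₂) has only real zeros. -/
open MvPolynomial Polynomial

/-!
For `ε > 0`, `p` is hyperbolic with respect to `(0, ε, 1)`, so `t ↦ p(x - t(0, ε, 1))` has only
real zeros; as `ε → 0⁺` these polynomials converge pointwise to `t ↦ p(x - t e₂)` and their
degrees stay at most `deg p`. Real-rootedness survives such limits, allowing the zero polynomial: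
if `q` has only real zeros then `|q(w)| ≤ 2 ^ deg q * |q(z)|` whenever `|w - Re z| ≤ |Im z|`,
because every linear factor satisfies `|w - r| ≤ 2 |z - r|`. In the limit, a non-real zero `z`
makes the polynomial vanish on the real interval `[Re z - |Im z|, Re z + |Im z|]`, so it is zero.
-/

/-- The one-variable complex polynomial `t ↦ P(x - t·e)` for `P ∈ ℝ[x₀,…,x_{N-1}]`. -/
noncomputable def linePoly {N : ℕ} (p : MvPolynomial (Fin N) ℝ) (x e : Fin N → ℝ) :
    Polynomial ℂ :=
  MvPolynomial.aeval (fun i => Polynomial.C (x i : ℂ) - Polynomial.C (e i : ℂ) * Polynomial.X) p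

/-- A real multivariate polynomial is hyperbolic with respect to `e` if `p(e) ≠ 0` and for
every real `x` the one-variable polynomial `t ↦ p(x - t e)` has only real zeros. -/
def Hyperbolic {N : ℕ} (p : MvPolynomial (Fin N) ℝ) (e : Fin N → ℝ) : Prop :=
  MvPolynomial.eval e p ≠ 0 ∧ ∀ x : Fin N → ℝ, ∀ z ∈ (linePoly p x e).roots, z.im = 0

/-- A real multivariate polynomial is semi-hyperbolic w.r.t. `e` if for every real `x`,
the one-variable polynomial `t ↦ p(x - t e)` has only real zeros. -/
def SemiHyperbolic {N : ℕ} (p : MvPolynomial (Fin N) ℝ) (e : Fin N → ℝ) : Prop :=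
  ∀ x : Fin N → ℝ, ∀ z ∈ (linePoly p x e).roots, z.im = 0

open Filter Topology

lemma norm_ofReal_sub_le_two_mul_norm_sub {r z : ℂ} (hr : r.im = 0) {w : ℝ}
    (hw : |w - z.re| ≤ |z.im|) : ‖(w : ℂ) - r‖ ≤ 2 * ‖z - r‖ := by
  have hwr : ‖(w : ℂ) - r‖ = |w - r.re| := by
    rw [← Complex.re_add_im r, hr]; simp [← Complex.ofReal_sub, Complex.norm_real]
  have hre := Complex.abs_re_le_norm (z - r)
  have him := Complex.abs_im_le_norm (z - r)
  rw [Complex.sub_re] at hre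
  rw [Complex.sub_im, hr, sub_zero] at him
  rw [hwr]
  calc |w - r.re| ≤ |w - z.re| + |z.re - r.re| := abs_sub_le _ _ _
    _ ≤ 2 * ‖z - r‖ := by linarith

lemma Polynomial.norm_eval_ofReal_le_of_roots_im_eq_zero {q : ℂ[X]}
    (hq : ∀ r ∈ q.roots, r.im = 0) {z : ℂ} {w : ℝ} (hw : |w - z.re| ≤ |z.im|) :
    ‖q.eval (w : ℂ)‖ ≤ 2 ^ q.natDegree * ‖q.eval z‖ := by
  have hnorm (t : ℂ) :
      ‖q.eval t‖ = ‖q.leadingCoeff‖ * (q.roots.map fun r => ‖t - r‖).prod := by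
    have hcard : q.roots.card = q.natDegree := IsAlgClosed.card_roots_eq_natDegree
    conv_lhs => rw [← C_leadingCoeff_mul_prod_multiset_X_sub_C hcard]
    rw [eval_mul, eval_C, eval_multiset_prod, Multiset.map_map, norm_mul]
    congr 1
    simpa [Multiset.map_map] using
      map_multiset_prod (normHom : ℂ →*₀ ℝ) (q.roots.map (t - ·))
  have hprod : (q.roots.map fun r => ‖(w : ℂ) - r‖).prod
      ≤ 2 ^ q.natDegree * (q.roots.map fun r => ‖z - r‖).prod := by
    calc (q.roots.map fun r => ‖(w : ℂ) - r‖).prod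
        ≤ (q.roots.map fun r => 2 * ‖z - r‖).prod :=
          Multiset.prod_map_le_prod_map₀ _ _ (fun _ _ => norm_nonneg _)
            fun r hr => norm_ofReal_sub_le_two_mul_norm_sub (hq r hr) hw
      _ = 2 ^ q.natDegree * (q.roots.map fun r => ‖z - r‖).prod := by
          simp [Multiset.prod_map_mul, IsAlgClosed.card_roots_eq_natDegree]
  rw [hnorm, hnorm, mul_left_comm]
  gcongr

lemma Polynomial.roots_im_eq_zero_of_tendsto {α : Type*} {l : Filter α} [l.NeBot]
    {q : α → ℂ[X]} {q₀ : ℂ[X]} {n : ℕ} (hdeg : ∀ᶠ a in l, (q a).natDegree ≤ n)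
    (hreal : ∀ᶠ a in l, ∀ r ∈ (q a).roots, r.im = 0)
    (hlim : ∀ c, Tendsto (fun a => (q a).eval c) l (𝓝 (q₀.eval c))) :
    ∀ z ∈ q₀.roots, z.im = 0 := by
  intro z hz
  by_contra him
  obtain ⟨hq₀, hz₀⟩ := mem_roots'.mp hz
  have hvanish : ∀ w : ℝ, |w - z.re| ≤ |z.im| → q₀.IsRoot w := by
    intro w hw
    have hle : ‖q₀.eval (w : ℂ)‖ ≤ 2 ^ n * ‖q₀.eval z‖ := by
      refine le_of_tendsto_of_tendsto (hlim w).norm ((hlim z).norm.const_mul _) ?_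
      filter_upwards [hdeg, hreal] with a hdega hreala
      calc ‖(q a).eval (w : ℂ)‖ ≤ 2 ^ (q a).natDegree * ‖(q a).eval z‖ :=
            norm_eval_ofReal_le_of_roots_im_eq_zero hreala hw
        _ ≤ 2 ^ n * ‖(q a).eval z‖ := by gcongr; norm_num
    simpa [hz₀.eq_zero] using hle
  have hinf : (Set.Icc (z.re - |z.im|) (z.re + |z.im|)).Infinite :=
    Set.Icc_infinite (by linarith [abs_pos.mpr him])
  refine hq₀ (eq_zero_of_infinite_isRoot q₀
    ((hinf.image Complex.ofReal_injective.injOn).mono ?_))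
  rintro _ ⟨w, hw, rfl⟩
  exact hvanish w (abs_le.mpr ⟨by linarith [hw.1], by linarith [hw.2]⟩)

lemma natDegree_aeval_le_totalDegree {σ R S : Type*} [CommSemiring R] [CommSemiring S]
    [Algebra R S] {f : σ → S[X]} (hf : ∀ i, (f i).natDegree ≤ 1) (p : MvPolynomial σ R) :
    (MvPolynomial.aeval f p).natDegree ≤ p.totalDegree := by
  rw [MvPolynomial.aeval_def, MvPolynomial.eval₂_eq, ← Finset.sum_attach]
  refine Polynomial.natDegree_sum_le_of_forall_le _ _ fun ⟨m, hm⟩ _ => ?_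
  refine natDegree_mul_le.trans ?_
  rw [Polynomial.algebraMap_apply, natDegree_C, zero_add]
  refine (natDegree_prod_le _ _).trans
    ((Finset.sum_le_sum fun i _ => ?_).trans (MvPolynomial.le_totalDegree hm))
  calc (f i ^ m i).natDegree ≤ m i * (f i).natDegree := natDegree_pow_le
    _ ≤ m i := by simpa using Nat.mul_le_mul_left (m i) (hf i)

lemma natDegree_linePoly_le {N : ℕ} (p : MvPolynomial (Fin N) ℝ) (x e : Fin N → ℝ) :
    (linePoly p x e).natDegree ≤ p.totalDegree := by
  refine natDegree_aeval_le_totalDegree (fun i => ?_) p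
  exact (natDegree_sub_le _ _).trans
    (max_le (by simp) ((natDegree_C_mul_le _ _).trans natDegree_X_le))

lemma eval_linePoly {N : ℕ} (p : MvPolynomial (Fin N) ℝ) (x e : Fin N → ℝ) (c : ℂ) :
    (linePoly p x e).eval c = MvPolynomial.aeval (fun i => (x i : ℂ) - e i * c) p := by
  change ((Polynomial.aeval c).restrictScalars ℝ) (MvPolynomial.aeval _ p) = _
  rw [← AlgHom.comp_apply, MvPolynomial.comp_aeval]
  simp

lemma continuous_eval_linePoly {N : ℕ} (p : MvPolynomial (Fin N) ℝ) (x : Fin N → ℝ)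
    (c : ℂ) {e : ℝ → Fin N → ℝ} (he : Continuous e) :
    Continuous fun s => (linePoly p x (e s)).eval c := by
  simp only [eval_linePoly, MvPolynomial.aeval_def, MvPolynomial.eval₂_eq_eval_map]
  exact (MvPolynomial.continuous_eval _).comp (by fun_prop)

theorem hyperbolic_cone_implies_semiHyperbolic_general (p : MvPolynomial (Fin 3) ℝ)
    (hhyp : ∀ v₁ v₂ : ℝ, 0 < v₁ → 0 < v₂ → Hyperbolic p ![0, v₁, v₂]) :
    SemiHyperbolic p ![0, 0, 1] := by
  intro x
  refine roots_im_eq_zero_of_tendsto (l := 𝓝[>] 0) (q := fun ε => linePoly p x ![0, ε, 1])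
    (.of_forall fun ε => natDegree_linePoly_le p x _) ?_ fun c => ?_
  · filter_upwards [self_mem_nhdsWithin] with ε hε using (hhyp ε 1 hε one_pos).2 x
  · exact ((continuous_eval_linePoly p x c (by fun_prop)).tendsto 0).mono_left nhdsWithin_le_nhds

/-- If `p ∈ ℝ[x₀,x₁,x₂]` is homogeneous and hyperbolic with respect to every vector in the
cone `{(0,v₁,v₂) : v₁,v₂ > 0}`, then `p` is semi-hyperbolic with respect to `e₂ = (0,0,1)`. -/
theorem hyperbolic_cone_implies_semiHyperbolic (d : ℕ) (p : MvPolynomial (Fin 3) ℝ)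
    (hhom : p.IsHomogeneous d)
    (hhyp : ∀ v₁ v₂ : ℝ, 0 < v₁ → 0 < v₂ → Hyperbolic p ![0, v₁, v₂]) :
    SemiHyperbolic p ![0, 0, 1] :=
  hyperbolic_cone_implies_semiHyperbolic_general p hhyp
end

section
/- Let A and B be n×n matrices over a field (or over ℂ). Then the one-variable polynomial t ↦ det(tA + B) has degree at most rank A. -/
open Polynomial Matrix

/-!
Expanding `det (X • A + B)` by multilinearity in the rows gives one term `X ^ #S • det M_S` for
each set `S` of rows, where `M_S` takes the rows in `S` from `A` and the others from `B`. When
`#S > rank A` those rows of `A` are linearly dependent, so `det M_S = 0`; every surviving term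
has degree at most `rank A`.
-/

namespace Matrix

variable {ι : Type*} [Fintype ι] [DecidableEq ι]

theorem det_smul_add_eq_sum {R : Type*} [CommRing R] (c : R) (A B : Matrix ι ι R) :
    (c • A + B).det = ∑ S : Finset ι, c ^ S.card * (of (S.piecewise A B)).det := by
  refine (detRowAlternating.map_add_univ (fun i => c • A i) B).trans
    (Finset.sum_congr rfl fun S _ => ?_)
  have hrows : S.piecewise (fun i => c • A i) B =
      S.piecewise (fun i => c • S.piecewise A B i) (S.piecewise A B) := by
    ext i : 1
    by_cases hi : i ∈ S <;> simp [Finset.piecewise, hi]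
  rw [hrows, ← Finset.prod_const, ← smul_eq_mul]
  exact detRowAlternating.map_piecewise_smul (fun _ => c) (S.piecewise A B) S

theorem det_piecewise_eq_zero_of_rank_lt {K : Type*} [Field K] (A B : Matrix ι ι K)
    {S : Finset ι} (hS : A.rank < S.card) : (of (S.piecewise A B)).det = 0 := by
  refine det_eq_zero_of_not_linearIndependent_rows fun hrows => hS.not_ge ?_
  have hsub : LinearIndependent K (A.submatrix ((↑) : S → ι) id).row := by
    have hrowsS : (A.submatrix ((↑) : S → ι) id).row =
        (fun i => of (S.piecewise A B) i) ∘ (↑) :=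
      funext fun i => (S.piecewise_eq_of_mem A B i.2).symm
    rw [hrowsS]
    exact hrows.comp _ Subtype.val_injective
  calc S.card = (A.submatrix ((↑) : S → ι) id).rank := by
        rw [hsub.rank_matrix, Fintype.card_coe]
    _ ≤ A.rank := rank_submatrix_le _ _ _

theorem det_X_smul_map_C_add_map_C {R : Type*} [CommRing R] (A B : Matrix ι ι R) :
    ((X : R[X]) • A.map C + B.map C).det =
      ∑ S : Finset ι, C (of (S.piecewise A B)).det * X ^ S.card := by
  rw [det_smul_add_eq_sum]
  refine Finset.sum_congr rfl fun S _ => ?_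
  have hmap : of (S.piecewise (A.map C) (B.map C)) = (of (S.piecewise A B)).map C := by
    ext i j
    by_cases hi : i ∈ S <;> simp [Finset.piecewise, hi]
  rw [hmap, mul_comm, RingHom.map_det]
  rfl

theorem degree_det_X_smul_map_C_add_map_C_le_rank {K : Type*} [Field K] (A B : Matrix ι ι K) :
    ((X : K[X]) • A.map C + B.map C).det.degree ≤ A.rank := by
  rw [det_X_smul_map_C_add_map_C]
  refine (degree_sum_le _ _).trans (Finset.sup_le fun S _ => ?_)
  rcases le_or_gt S.card A.rank with hS | hS
  · exact degree_C_mul_X_pow_le _ _ |>.trans (by exact_mod_cast hS)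
  · simp [det_piecewise_eq_zero_of_rank_lt A B hS]

end Matrix

/-- For `n×n` matrices `A, B` over a field, the one-variable polynomial `t ↦ det(tA + B)`
has degree at most `rank A`. -/
theorem det_add_smul_degree_le_rank {F : Type*} [Field F] {n : ℕ}
    (A B : Matrix (Fin n) (Fin n) F) :
    (Matrix.det (fun i j => Polynomial.X * Polynomial.C (A i j) + Polynomial.C (B i j)
        : Matrix (Fin n) (Fin n) (Polynomial F))).degree ≤ (A.rank : WithBot ℕ) :=
  Matrix.degree_det_X_smul_map_C_add_map_C_le_rank A B
end
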